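/- For any λ > 0, x > 1 and 0 ≤ y < x, f_λ(x,y) ≤ (1/λ)[1 - ((x-1)/x)^{λ/r}]. -/

import Mathlib

/-!
Write `c = λ/r`. The function `G u = u^c ((y-u)^(-c) - y^(-c)) / c` vanishes at `0` and has
derivative `u^c (y-u)^(-c-1) + u^(c-1) ((y-u)^(-c) - y^(-c))`, which dominates the integrand
because `(y-u)^(-c) ≥ y^(-c)`. Hence the integral is at most `G (y/x) = ((x-1)^(-c) - x^(-c)) / c`,
and multiplying by `(x-1)^c / r` gives the bound.
-/

open Real Set intervalIntegral

lemma hasDerivAt_rpow_mul_rpow_neg_sub {c y u : ℝ} (hc : c ≠ 0) (hu : 0 < u) (huy : u < y) :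
    HasDerivAt (fun v => v ^ c * ((y - v) ^ (-c) - y ^ (-c)) / c)
      (u ^ c * (y - u) ^ (-c - 1) + u ^ (c - 1) * ((y - u) ^ (-c) - y ^ (-c))) u := by
  have hsub : HasDerivAt (fun v => (y - v) ^ (-c)) (-1 * -c * (y - u) ^ (-c - 1)) u :=
    ((hasDerivAt_id' u).const_sub y).rpow_const (Or.inl (sub_pos.2 huy).ne')
  refine (((hasDerivAt_rpow_const (p := c) (Or.inl hu.ne')).mul
    (hsub.sub_const (y ^ (-c)))).div_const c).congr_deriv ?_
  field_simp
  ring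

lemma continuousOn_const_sub_rpow {p y b : ℝ} (hby : b < y) :
    ContinuousOn (fun u => (y - u) ^ p) (Icc 0 b) :=
  (continuousOn_const.sub continuousOn_id).rpow_const fun _ hu =>
    Or.inl (sub_pos.2 (hu.2.trans_lt hby)).ne'

theorem integral_rpow_mul_rpow_sub_le {c b y : ℝ} (hc : 0 < c) (hb : 0 ≤ b) (hby : b < y) :
    ∫ u in 0..b, u ^ c * (y - u) ^ (-c - 1) ≤ b ^ c * ((y - b) ^ (-c) - y ^ (-c)) / c := by
  have hpow : ContinuousOn (fun u : ℝ => u ^ c) (Icc 0 b) :=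
    continuousOn_id.rpow_const fun _ _ => Or.inr hc.le
  have hFTC := integral_le_sub_of_hasDeriv_right_of_le hb
    (φ := fun u => u ^ c * (y - u) ^ (-c - 1))
    (((hpow.mul ((continuousOn_const_sub_rpow hby).sub continuousOn_const)).div_const c))
    (fun u hu => (hasDerivAt_rpow_mul_rpow_neg_sub hc.ne' hu.1 (hu.2.trans hby)).hasDerivWithinAt)
    (hpow.mul (continuousOn_const_sub_rpow hby)).integrableOn_Icc
    (fun u hu => ?_)
  · simpa [zero_rpow hc.ne'] using hFTC
  · have hyu : 0 < y - u := by linarith [hu.2]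
    have hmono : y ^ (-c) ≤ (y - u) ^ (-c) := rpow_le_rpow_of_nonpos hyu (by linarith [hu.1]) (by linarith)
    exact le_add_of_nonneg_right (mul_nonneg (rpow_nonneg hu.1.le _) (sub_nonneg.2 hmono))

lemma div_rpow_mul_sub_rpow_neg {c x y : ℝ} (hx : 1 < x) (hy : 0 < y) :
    (y / x) ^ c * ((y - y / x) ^ (-c) - y ^ (-c)) = (x - 1) ^ (-c) - x ^ (-c) := by
  have hx0 : 0 < x := one_pos.trans hx
  have hb : 0 < y / x := div_pos hy hx0
  have hsplit : y - y / x = y / x * (x - 1) := by field_simp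
  have hy_eq : y = y / x * x := by field_simp
  rw [hsplit, mul_rpow hb.le (by linarith), hy_eq, mul_rpow hb.le hx0.le, ← hy_eq,
    ← mul_sub, ← mul_assoc, ← rpow_add hb, add_neg_cancel, rpow_zero, one_mul]

theorem stmt_3 (r : ℝ) (hr : 0 < r) (lam : ℝ) (hlam : 0 < lam)
    (x y : ℝ) (hx : 1 < x) (hy0 : 0 ≤ y) (hy : y < x) :
    ((x - 1) ^ (lam / r) / r) *
      ∫ u in (0:ℝ)..(min (y / x) 1), u ^ (lam / r) * (y - u) ^ (-(lam / r) - 1)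
      ≤ (1 / lam) * (1 - ((x - 1) / x) ^ (lam / r)) := by
  set c := lam / r with hc_def
  have hc : 0 < c := div_pos hlam hr
  have hx0 : 0 < x := one_pos.trans hx
  have hx1 : 0 < x - 1 := sub_pos.2 hx
  rcases hy0.eq_or_lt with rfl | hy0
  · have hle : ((x - 1) / x) ^ c ≤ 1 :=
      rpow_le_one (div_nonneg hx1.le hx0.le) ((div_le_one hx0).2 (by linarith)) hc.le
    simp only [zero_div, zero_le_one, min_eq_left, integral_same, mul_zero]
    exact mul_nonneg (by positivity) (sub_nonneg.2 hle)
  · rw [min_eq_left ((div_le_one hx0).2 hy.le)]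
    calc _ ≤ (x - 1) ^ c / r * ((y / x) ^ c * ((y - y / x) ^ (-c) - y ^ (-c)) / c) :=
          mul_le_mul_of_nonneg_left
            (integral_rpow_mul_rpow_sub_le hc (div_pos hy0 hx0).le (div_lt_self hy0 hx))
            (by positivity)
      _ = _ := by
        rw [div_rpow_mul_sub_rpow_neg hx hy0, rpow_neg hx1.le, rpow_neg hx0.le,
          div_rpow hx1.le hx0.le, hc_def]
        field_simp
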